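/- arXiv:1110.0215 — 2 statements merged into one kernel-verified Lean document; each statement's English description precedes it below -/
import Mathlib

section
/- Fix h₁ > h₂ > 0 and P > 0. For P₁ ∈ [0, P], let r₁(P₁) = γ(h₁²P₁), r₂(P₁) = γ(h₂²P) − γ(h₂²P₁), g(P₁) = (1/h₁² + P₁)/(1/h₂² + P₁), and define 1/b(P₁) = r₂(P₁) + g(P₁)·r₁(P₁). Then the derivative of 1/b with respect to P₁ equals (h₁² − h₂²)·h₁²·h₂²/(h₁² + h₁²h₂²P₁)² · γ(h₁²P₁), which is nonnegative on [0, P]; hence 1/b is monotonically increasing on [0, P] with minimum value γ(h₂²P) at P₁ = 0. -/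
/-! With `g s = (1/h₁² + s)/(1/h₂² + s)`, the identity `g s · h₁²/(1 + h₁² s) = h₂²/(1 + h₂² s)` makes the
derivatives of the two logarithms in `1/b` cancel, leaving `g'(s) · γ(h₁² s)`. Since `h₁ > h₂`, `g` is increasing
and `γ ≥ 0` on `[0, ∞)`, so `1/b` is increasing there, starting from `γ(h₂² P)` at `s = 0`. -/

noncomputable def gam (x : ℝ) : ℝ := (1/2) * Real.logb 2 (1 + x)

open Set

lemma gam_nonneg {x : ℝ} (hx : 0 ≤ x) : 0 ≤ gam x :=
  mul_nonneg (by norm_num) (Real.logb_nonneg one_lt_two (by linarith))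

lemma gam_zero : gam 0 = 0 := by
  simp [gam]

lemma hasDerivAt_gam_const_mul {c t : ℝ} (ht : 0 < 1 + c * t) :
    HasDerivAt (fun s => gam (c * s)) (c / (2 * Real.log 2 * (1 + c * t))) t := by
  have hlog : HasDerivAt (fun s => Real.log (1 + c * s)) (c / (1 + c * t)) t := by
    simpa using (((hasDerivAt_id t).const_mul c).const_add 1).log ht.ne'
  simp only [gam, Real.logb]
  refine ((hlog.div_const (Real.log 2)).const_mul (1 / 2)).congr_deriv ?_
  field_simp

lemma hasDerivAt_add_div_add {u v t : ℝ} (ht : v + t ≠ 0) :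
    HasDerivAt (fun s => (u + s) / (v + s)) ((v - u) / (v + t) ^ 2) t := by
  refine (((hasDerivAt_id' t).const_add u).div ((hasDerivAt_id' t).const_add v) ht).congr_deriv ?_
  ring

/-- The paper's `1/b` as a function of `P₁ = s`, with `a₁ = h₁²` and `a₂ = h₂²`. -/
noncomputable def oneOverB (a₁ a₂ P s : ℝ) : ℝ :=
  (gam (a₂ * P) - gam (a₂ * s)) + ((1 / a₁ + s) / (1 / a₂ + s)) * gam (a₁ * s)

section

variable {a₁ a₂ : ℝ} (P : ℝ)

lemma oneOverB_zero : oneOverB a₁ a₂ P 0 = gam (a₂ * P) := by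
  simp [oneOverB, gam_zero]

lemma hasDerivAt_oneOverB (ha₁ : 0 < a₁) (ha₂ : 0 < a₂) {t : ℝ} (ht : 0 ≤ t) :
    HasDerivAt (oneOverB a₁ a₂ P)
      ((a₁ - a₂) * a₁ * a₂ / (a₁ + a₁ * a₂ * t) ^ 2 * gam (a₁ * t)) t := by
  have h₁t : 0 < 1 + a₁ * t := by positivity
  have h₂t : 0 < 1 + a₂ * t := by positivity
  have hratio := hasDerivAt_add_div_add (u := 1 / a₁) (v := 1 / a₂) (t := t)
    (add_pos_of_pos_of_nonneg (by positivity) ht).ne'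
  have hsum := ((hasDerivAt_const t (gam (a₂ * P))).sub (hasDerivAt_gam_const_mul h₂t)).add
    (hratio.mul (hasDerivAt_gam_const_mul h₁t))
  have hcancel : (1 / a₁ + t) / (1 / a₂ + t) * (a₁ / (2 * Real.log 2 * (1 + a₁ * t)))
      = a₂ / (2 * Real.log 2 * (1 + a₂ * t)) := by
    field_simp
  refine hsum.congr_deriv ?_
  rw [hcancel]
  field_simp
  ring

lemma deriv_oneOverB_nonneg (ha₂ : 0 < a₂) (h : a₂ ≤ a₁) {t : ℝ} (ht : 0 ≤ t) :
    0 ≤ deriv (oneOverB a₁ a₂ P) t := by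
  have ha₁ : 0 < a₁ := ha₂.trans_le h
  rw [(hasDerivAt_oneOverB P ha₁ ha₂ ht).deriv]
  have hcoeff : 0 ≤ (a₁ - a₂) * a₁ * a₂ :=
    mul_nonneg (mul_nonneg (sub_nonneg.mpr h) ha₁.le) ha₂.le
  exact mul_nonneg (div_nonneg hcoeff (sq_nonneg _)) (gam_nonneg (mul_nonneg ha₁.le ht))

lemma monotoneOn_oneOverB (ha₂ : 0 < a₂) (h : a₂ ≤ a₁) : MonotoneOn (oneOverB a₁ a₂ P) (Ici 0) := by
  have hderiv {t : ℝ} (ht : 0 ≤ t) := hasDerivAt_oneOverB P (ha₂.trans_le h) ha₂ ht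
  refine monotoneOn_of_deriv_nonneg (convex_Ici 0)
    (fun t ht => (hderiv ht).continuousAt.continuousWithinAt) (fun t ht => ?_) (fun t ht => ?_)
  all_goals rw [interior_Ici] at ht
  · exact (hderiv (le_of_lt ht)).differentiableAt.differentiableWithinAt
  · exact deriv_oneOverB_nonneg P ha₂ h (le_of_lt ht)

end

theorem one_over_b_increasing_general (h₁ h₂ P : ℝ)
    (hh₂ : 0 < h₂) (hh : h₂ < h₁) :
    (∀ t ∈ Set.Icc (0 : ℝ) P,
        deriv (fun s : ℝ =>
            (gam (h₂^2 * P) - gam (h₂^2 * s)) +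
              ((1 / h₁^2 + s) / (1 / h₂^2 + s)) * gam (h₁^2 * s)) t
          = (h₁^2 - h₂^2) * h₁^2 * h₂^2 / (h₁^2 + h₁^2 * h₂^2 * t)^2 * gam (h₁^2 * t) ∧
        0 ≤ deriv (fun s : ℝ =>
            (gam (h₂^2 * P) - gam (h₂^2 * s)) +
              ((1 / h₁^2 + s) / (1 / h₂^2 + s)) * gam (h₁^2 * s)) t) ∧
    MonotoneOn (fun s : ℝ =>
        (gam (h₂^2 * P) - gam (h₂^2 * s)) +
          ((1 / h₁^2 + s) / (1 / h₂^2 + s)) * gam (h₁^2 * s)) (Set.Icc 0 P) ∧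
    ((gam (h₂^2 * P) - gam (h₂^2 * 0)) +
        ((1 / h₁^2 + 0) / (1 / h₂^2 + 0)) * gam (h₁^2 * 0) = gam (h₂^2 * P)) ∧
    (∀ t ∈ Set.Icc (0 : ℝ) P,
      gam (h₂^2 * P) ≤
        (gam (h₂^2 * P) - gam (h₂^2 * t)) +
          ((1 / h₁^2 + t) / (1 / h₂^2 + t)) * gam (h₁^2 * t)) := by
  have ha₂ : 0 < h₂ ^ 2 := by positivity
  have hle : h₂ ^ 2 ≤ h₁ ^ 2 := pow_le_pow_left₀ hh₂.le hh.le 2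
  have ha₁ : 0 < h₁ ^ 2 := ha₂.trans_le hle
  have hmono := monotoneOn_oneOverB P ha₂ hle
  refine ⟨fun t ht => ⟨(hasDerivAt_oneOverB P ha₁ ha₂ ht.1).deriv,
    deriv_oneOverB_nonneg P ha₂ hle ht.1⟩, hmono.mono Icc_subset_Ici_self, oneOverB_zero P,
    fun t ht => ?_⟩
  exact (oneOverB_zero P).symm.trans_le (hmono self_mem_Ici ht.1 ht.1)

theorem one_over_b_increasing (h₁ h₂ P : ℝ)
    (hh₂ : 0 < h₂) (hh : h₂ < h₁) (hP : 0 < P) :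
    (∀ t ∈ Set.Icc (0 : ℝ) P,
        deriv (fun s : ℝ =>
            (gam (h₂^2 * P) - gam (h₂^2 * s)) +
              ((1 / h₁^2 + s) / (1 / h₂^2 + s)) * gam (h₁^2 * s)) t
          = (h₁^2 - h₂^2) * h₁^2 * h₂^2 / (h₁^2 + h₁^2 * h₂^2 * t)^2 * gam (h₁^2 * t) ∧
        0 ≤ deriv (fun s : ℝ =>
            (gam (h₂^2 * P) - gam (h₂^2 * s)) +
              ((1 / h₁^2 + s) / (1 / h₂^2 + s)) * gam (h₁^2 * s)) t) ∧
    MonotoneOn (fun s : ℝ =>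
        (gam (h₂^2 * P) - gam (h₂^2 * s)) +
          ((1 / h₁^2 + s) / (1 / h₂^2 + s)) * gam (h₁^2 * s)) (Set.Icc 0 P) ∧
    ((gam (h₂^2 * P) - gam (h₂^2 * 0)) +
        ((1 / h₁^2 + 0) / (1 / h₂^2 + 0)) * gam (h₁^2 * 0) = gam (h₂^2 * P)) ∧
    (∀ t ∈ Set.Icc (0 : ℝ) P,
      gam (h₂^2 * P) ≤
        (gam (h₂^2 * P) - gam (h₂^2 * t)) +
          ((1 / h₁^2 + t) / (1 / h₂^2 + t)) * gam (h₁^2 * t)) :=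
  one_over_b_increasing_general h₁ h₂ P hh₂ hh
end

section
/- Fix h₁ > h₂ > 0 and P > 0, and let P₁ ∈ (0, P). With a(P₁), b(P₁) as defined from the tangent line to the Gaussian BC capacity region boundary at P₁, and R₁* = γ(h₁²P), R₂* = γ(h₂²P), the quantities w₁ = 1 − b(P₁)·R₂* and w₂ = a(P₁)·R₁* satisfy w₁ ∈ [0, 1) and w₂ ∈ (0, 1]. -/
open Real Set

theorem log_div_sub_one_le_log_div_sub_one {x y : ℝ} (hx : 0 < x) (hxy : x ≤ y)
    (hx₁ : x ≠ 1) (hy₁ : y ≠ 1) : log y / (y - 1) ≤ log x / (x - 1) := by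
  have := strictConcaveOn_log_Ioi.concaveOn.neg.secant_mono (a := 1) (mem_Ioi.2 one_pos)
    (mem_Ioi.2 hx) (mem_Ioi.2 (hx.trans_le hxy)) hx₁ hy₁ hxy
  simp only [Pi.neg_apply, log_one, neg_zero, sub_zero, neg_div] at this
  linarith

theorem log_one_add_div_antitoneOn : AntitoneOn (fun x => log (1 + x) / x) (Ioi 0) := by
  intro x hx y hy hxy
  have hx : 0 < x := hx
  have hy : 0 < y := hy
  simpa using log_div_sub_one_le_log_div_sub_one (x := 1 + x) (y := 1 + y) (by linarith)
    (by linarith) (by linarith) (by linarith)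

theorem one_add_mul_log_one_add_div_monotoneOn :
    MonotoneOn (fun x => (1 + x) * log (1 + x) / x) (Ioi 0) := by
  intro x hx y hy hxy
  have hx : 0 < x := hx
  have hy : 0 < y := hy
  have hslope := log_div_sub_one_le_log_div_sub_one (x := (1 + y)⁻¹) (y := (1 + x)⁻¹)
    (by positivity) (inv_anti₀ (by positivity) (by linarith))
    (inv_ne_one.2 (by linarith)) (inv_ne_one.2 (by linarith))
  have hslope_eq : ∀ z : ℝ, 0 < z → log (1 + z)⁻¹ / ((1 + z)⁻¹ - 1) = (1 + z) * log (1 + z) / z := by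
    intro z hz
    have : (1 + z)⁻¹ - 1 = -(z / (1 + z)) := by field_simp; ring
    rw [log_inv, this, neg_div_neg_eq, div_div_eq_mul_div, mul_comm]
  simpa only [hslope_eq x hx, hslope_eq y hy] using hslope

theorem gam_eq_log (x : ℝ) : gam x = log (1 + x) / (2 * log 2) := by
  rw [gam, logb]
  ring

theorem gam_pos {x : ℝ} (hx : 0 < x) : 0 < gam x := by
  rw [gam_eq_log]
  have := log_pos (one_lt_two : (1 : ℝ) < 2)
  have := log_pos (by linarith : 1 < 1 + x)
  positivity

theorem gam_mul_sub_gam_mul {c p q : ℝ} (hc : c ≠ 0) (hp : 1 + c * p ≠ 0) (hq : 1 + c * q ≠ 0) :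
    gam (c * q) - gam (c * p) = gam ((q - p) / (1 / c + p)) := by
  have : 1 + (q - p) / (1 / c + p) = (1 + c * q) / (1 + c * p) := by
    have hsum : 1 / c + p = (1 + c * p) / c := by field_simp
    rw [hsum, div_div_eq_mul_div, eq_div_iff hp, add_mul, div_mul_cancel₀ _ hp]
    ring
  rw [gam, gam, gam, this, logb_div hq hp]
  ring

theorem monotoneOn_one_div_add_mul_gam_mul {p : ℝ} (hp : 0 ≤ p) :
    MonotoneOn (fun c => (1 / c + p) * gam (c * p)) (Ioi 0) := by
  rcases hp.eq_or_lt with rfl | hp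
  · simp [gam, monotoneOn_const]
  intro c hc d hd hcd
  have hc : 0 < c := hc
  have hd : 0 < d := hd
  have hrepr : ∀ c : ℝ, 0 < c →
      (1 / c + p) * gam (c * p) = p * ((1 + c * p) * log (1 + c * p) / (c * p)) / (2 * log 2) := by
    intro c hc
    rw [gam_eq_log]
    field_simp
  simp only [hrepr c hc, hrepr d hd]
  gcongr p * ?_ / _
  exact one_add_mul_log_one_add_div_monotoneOn (by positivity : 0 < c * p)
    (by positivity : 0 < d * p) (by gcongr)

theorem antitoneOn_one_div_add_mul_gam_mul_sub {p q : ℝ} (hp : 0 ≤ p) (hpq : p ≤ q) :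
    AntitoneOn (fun c => (1 / c + p) * (gam (c * q) - gam (c * p))) (Ioi 0) := by
  rcases hpq.eq_or_lt with rfl | hpq
  · simp [antitoneOn_const]
  intro c hc d hd hcd
  have hc : 0 < c := hc
  have hd : 0 < d := hd
  have hrepr : ∀ c : ℝ, 0 < c → (1 / c + p) * (gam (c * q) - gam (c * p)) =
      (q - p) * (log (1 + (q - p) / (1 / c + p)) / ((q - p) / (1 / c + p))) / (2 * log 2) := by
    intro c hc
    rw [gam_mul_sub_gam_mul hc.ne' (by positivity) (by nlinarith), gam_eq_log]
    field_simp
  simp only [hrepr c hc, hrepr d hd]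
  have hs : 0 < q - p := by linarith
  gcongr (q - p) * ?_ / _
  exact log_one_add_div_antitoneOn (by positivity : 0 < (q - p) / (1 / c + p))
    (by positivity : 0 < (q - p) / (1 / d + p)) (by gcongr)

theorem weights_in_unit_interval_general (h₁ h₂ P P₁ : ℝ)
    (hh₂ : 0 < h₂) (hh : h₂ < h₁) (hP₁ : P₁ ∈ Set.Ioo (0 : ℝ) P) :
    let r₁ := gam (h₁^2 * P₁)
    let r₂ := gam (h₂^2 * P) - gam (h₂^2 * P₁)
    let g := (1 / h₁^2 + P₁) / (1 / h₂^2 + P₁)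
    let a := g / (r₂ + g * r₁)
    let b := 1 / (r₂ + g * r₁)
    let R₁s := gam (h₁^2 * P)
    let R₂s := gam (h₂^2 * P)
    (0 ≤ 1 - b * R₂s ∧ 1 - b * R₂s < 1) ∧ (0 < a * R₁s ∧ a * R₁s ≤ 1) := by
  obtain ⟨hP₁, hP₁P⟩ := hP₁
  intro r₁ r₂ g a b R₁s R₂s
  have hc₂ : 0 < h₂ ^ 2 := by positivity
  have hc : h₂ ^ 2 ≤ h₁ ^ 2 := pow_le_pow_left₀ hh₂.le hh.le 2
  have hc₁ : 0 < h₁ ^ 2 := hc₂.trans_le hc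
  have hN₂ : 0 < 1 / h₂ ^ 2 + P₁ := by positivity
  have hg : 0 < g := by positivity
  have hR₂s_le : R₂s ≤ r₂ + g * r₁ := by
    have hmono := monotoneOn_one_div_add_mul_gam_mul hP₁.le hc₂ hc₁ hc
    have : gam (h₂ ^ 2 * P₁) ≤ g * r₁ := by
      rw [div_mul_eq_mul_div, le_div_iff₀ hN₂]
      linarith
    linarith
  have hgR₁s_le : g * R₁s ≤ r₂ + g * r₁ := by
    have hanti := antitoneOn_one_div_add_mul_gam_mul_sub hP₁.le hP₁P.le hc₂ hc₁ hc
    have : g * (R₁s - r₁) ≤ r₂ := by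
      rw [div_mul_eq_mul_div, div_le_iff₀ hN₂]
      linarith
    linarith
  have hP : 0 < P := hP₁.trans hP₁P
  have hR₁s : 0 < R₁s := gam_pos (mul_pos hc₁ hP)
  have hR₂s : 0 < R₂s := gam_pos (mul_pos hc₂ hP)
  have hD : 0 < r₂ + g * r₁ := hR₂s.trans_le hR₂s_le
  have hbR : b * R₂s = R₂s / (r₂ + g * r₁) := one_div_mul_eq_div _ _
  have haR : a * R₁s = g * R₁s / (r₂ + g * r₁) := div_mul_eq_mul_div _ _ _
  refine ⟨⟨?_, ?_⟩, ?_, ?_⟩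
  · rw [hbR, sub_nonneg]
    exact (div_le_one hD).2 hR₂s_le
  · rw [hbR]
    linarith [div_pos hR₂s hD]
  · rw [haR]
    positivity
  · rw [haR]
    exact (div_le_one hD).2 hgR₁s_le

theorem weights_in_unit_interval (h₁ h₂ P P₁ : ℝ)
    (hh₂ : 0 < h₂) (hh : h₂ < h₁) (hP : 0 < P) (hP₁ : P₁ ∈ Set.Ioo (0 : ℝ) P) :
    let r₁ := gam (h₁^2 * P₁)
    let r₂ := gam (h₂^2 * P) - gam (h₂^2 * P₁)
    let g := (1 / h₁^2 + P₁) / (1 / h₂^2 + P₁)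
    let a := g / (r₂ + g * r₁)
    let b := 1 / (r₂ + g * r₁)
    let R₁s := gam (h₁^2 * P)
    let R₂s := gam (h₂^2 * P)
    (0 ≤ 1 - b * R₂s ∧ 1 - b * R₂s < 1) ∧ (0 < a * R₁s ∧ a * R₁s ≤ 1) :=
  weights_in_unit_interval_general h₁ h₂ P P₁ hh₂ hh hP₁
end
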